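/- For 0 < λ < λ' < Λ(A,B) one has ψ_λ(t⁺(λ)) < ψ_{λ'}(t⁺(λ')); that is, the value of the fiber map at its local minimum point is a strictly increasing function of λ on (0, Λ(A,B)). -/

import Mathlib

open Real Set Filter

/-- Fiber map `ψ_λ(t) = (a/2)·A·t² + (λ/4)·A²·t⁴ − (1/γ)·B·t^γ`. -/
noncomputable def psi (a γ A B lam t : ℝ) : ℝ :=
  a / 2 * A * t ^ 2 + lam / 4 * A ^ 2 * t ^ 4 - 1 / γ * B * t ^ γ

/-- The constant `C_{a,γ} = a·((γ−2)/(4−γ))·((4−γ)/(2a))^(2/(γ−2))`. -/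
noncomputable def Cag (a γ : ℝ) : ℝ :=
  a * ((γ - 2) / (4 - γ)) * ((4 - γ) / (2 * a)) ^ (2 / (γ - 2))

/-- The extremal value `Λ(A,B) = C_{a,γ}·B^(2/(γ−2))·A^(−γ/(γ−2))`. -/
noncomputable def Lam (a γ A B : ℝ) : ℝ :=
  Cag a γ * B ^ (2 / (γ - 2)) * A ^ (-(γ / (γ - 2)))

/-- `T(A,B) = (2aA/((4−γ)B))^(1/(γ−2))`. -/
noncomputable def Tab (a γ A B : ℝ) : ℝ :=
  (2 * a * A / ((4 - γ) * B)) ^ (1 / (γ - 2))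

/-!
`ψ_λ'(t) = A²t³ (λ − critLam t)`, so the critical points of `ψ_λ` are the solutions of
`critLam t = λ`. For `2 < γ < 4`, `critLam` increases on `(0, T]` and decreases on `[T, ∞)`, where
`T = Tab a γ A B`. Hence the larger of two critical points, `t⁺(λ)`, lies beyond `T`, and there
`ψ_λ` switches from decreasing to increasing: `ψ_λ(t⁺(λ))` is the minimum of `ψ_λ` on `[T, ∞)`.
Since also `t⁺(λ') > T`, we get `ψ_λ(t⁺(λ)) ≤ ψ_λ(t⁺(λ')) < ψ_{λ'}(t⁺(λ'))`, the last step because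
`ψ_λ(t)` increases with `λ`.
-/

noncomputable def critLam (a γ A B t : ℝ) : ℝ :=
  B / A ^ 2 * t ^ (γ - 4) - a / A * t ^ (-2 : ℝ)

variable {a γ A B lam t : ℝ}

lemma hasDerivAt_psi (ht : 0 < t) (hγ : γ ≠ 0) :
    HasDerivAt (psi a γ A B lam) (a * A * t + lam * A ^ 2 * t ^ 3 - B * t ^ (γ - 1)) t := by
  have h2 := (hasDerivAt_pow 2 t).const_mul (a / 2 * A)
  have h4 := (hasDerivAt_pow 4 t).const_mul (lam / 4 * A ^ 2)
  have hγ' := (hasDerivAt_rpow_const (p := γ) (Or.inl ht.ne')).const_mul (1 / γ * B)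
  refine ((h2.add h4).sub hγ').congr_deriv ?_
  push_cast
  field_simp

lemma continuousOn_psi (hγ : γ ≠ 0) : ContinuousOn (psi a γ A B lam) (Ioi 0) :=
  fun _ ht => (hasDerivAt_psi ht hγ).continuousAt.continuousWithinAt

lemma deriv_psi_eq (ht : 0 < t) (hγ : γ ≠ 0) (hA : A ≠ 0) :
    deriv (psi a γ A B lam) t = A ^ 2 * t ^ 3 * (lam - critLam a γ A B t) := by
  have e1 : t ^ 3 * t ^ (γ - 4) = t ^ (γ - 1) := by
    rw [← rpow_natCast t 3, ← rpow_add ht]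
    norm_num
    ring_nf
  have e2 : t ^ 3 * t ^ (-2 : ℝ) = t := by
    rw [← rpow_natCast t 3, ← rpow_add ht]
    norm_num
  have hexpand : A ^ 2 * t ^ 3 * (lam - critLam a γ A B t)
      = lam * A ^ 2 * t ^ 3 - B * (t ^ 3 * t ^ (γ - 4)) + a * A * (t ^ 3 * t ^ (-2 : ℝ)) := by
    rw [critLam]
    field_simp
    ring
  rw [(hasDerivAt_psi ht hγ).deriv, hexpand, e1, e2]
  ring

lemma critLam_eq_of_deriv_psi_eq_zero (ht : 0 < t) (hγ : γ ≠ 0) (hA : A ≠ 0)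
    (hcrit : deriv (psi a γ A B lam) t = 0) : critLam a γ A B t = lam := by
  rw [deriv_psi_eq ht hγ hA] at hcrit
  have hpos : A ^ 2 * t ^ 3 ≠ 0 := by positivity
  linarith [(mul_eq_zero.mp hcrit).resolve_left hpos]

lemma hasDerivAt_critLam (ht : 0 < t) (hA : A ≠ 0) :
    HasDerivAt (critLam a γ A B)
      (t ^ (-3 : ℝ) / A ^ 2 * (2 * a * A - (4 - γ) * B * t ^ (γ - 2))) t := by
  have h := ((hasDerivAt_rpow_const (p := γ - 4) (Or.inl ht.ne')).const_mul (B / A ^ 2)).sub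
    ((hasDerivAt_rpow_const (p := -2) (Or.inl ht.ne')).const_mul (a / A))
  refine h.congr_deriv ?_
  have e : t ^ (-3 : ℝ) * t ^ (γ - 2) = t ^ (γ - 4 - 1) := by
    rw [← rpow_add ht]
    ring_nf
  rw [show (-2 : ℝ) - 1 = -3 by norm_num, ← e]
  field_simp
  ring

lemma continuousOn_critLam (hA : A ≠ 0) : ContinuousOn (critLam a γ A B) (Ioi 0) :=
  fun _ ht => (hasDerivAt_critLam ht hA).continuousAt.continuousWithinAt

lemma Tab_pos (ha : 0 < a) (hγ4 : γ < 4) (hA : 0 < A) (hB : 0 < B) : 0 < Tab a γ A B :=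
  rpow_pos_of_pos (div_pos (by positivity) (mul_pos (by linarith) hB)) _

lemma Tab_rpow (ha : 0 < a) (hγ2 : 2 < γ) (hγ4 : γ < 4) (hA : 0 < A) (hB : 0 < B) :
    Tab a γ A B ^ (γ - 2) = 2 * a * A / ((4 - γ) * B) := by
  rw [Tab, ← rpow_mul (div_pos (by positivity) (mul_pos (by linarith) hB)).le,
    one_div, inv_mul_cancel₀ (by linarith), rpow_one]

section Tab

variable (ha : 0 < a) (hγ2 : 2 < γ) (hγ4 : γ < 4) (hA : 0 < A) (hB : 0 < B)
include ha hγ2 hγ4 hA hB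

lemma strictMonoOn_critLam : StrictMonoOn (critLam a γ A B) (Ioc 0 (Tab a γ A B)) := by
  refine strictMonoOn_of_deriv_pos (convex_Ioc _ _)
    ((continuousOn_critLam hA.ne').mono Ioc_subset_Ioi_self) fun t ht => ?_
  rw [interior_Ioc] at ht
  rw [(hasDerivAt_critLam ht.1 hA.ne').deriv]
  have hlt : t ^ (γ - 2) < 2 * a * A / ((4 - γ) * B) := by
    rw [← Tab_rpow ha hγ2 hγ4 hA hB]
    exact rpow_lt_rpow ht.1.le ht.2 (by linarith)
  rw [lt_div_iff₀ (mul_pos (by linarith) hB)] at hlt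
  exact mul_pos (div_pos (rpow_pos_of_pos ht.1 _) (by positivity)) (by linarith)

lemma strictAntiOn_critLam : StrictAntiOn (critLam a γ A B) (Ici (Tab a γ A B)) := by
  have hT := Tab_pos ha hγ4 hA hB
  refine strictAntiOn_of_deriv_neg (convex_Ici _)
    ((continuousOn_critLam hA.ne').mono fun t ht => hT.trans_le ht) fun t ht => ?_
  rw [interior_Ici] at ht
  have ht0 : 0 < t := hT.trans ht
  rw [(hasDerivAt_critLam ht0 hA.ne').deriv]
  have hlt : 2 * a * A / ((4 - γ) * B) < t ^ (γ - 2) := by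
    rw [← Tab_rpow ha hγ2 hγ4 hA hB]
    exact rpow_lt_rpow hT.le ht (by linarith)
  rw [div_lt_iff₀ (mul_pos (by linarith) hB)] at hlt
  exact mul_neg_of_pos_of_neg (div_pos (rpow_pos_of_pos ht0 _) (by positivity)) (by linarith)

lemma Tab_lt_of_deriv_psi_eq_zero {s : ℝ} (hs : 0 < s) (hst : s < t)
    (hs_crit : deriv (psi a γ A B lam) s = 0) (ht_crit : deriv (psi a γ A B lam) t = 0) :
    Tab a γ A B < t := by
  by_contra! htT
  have hmono := strictMonoOn_critLam ha hγ2 hγ4 hA hB ⟨hs, hst.le.trans htT⟩ ⟨hs.trans hst, htT⟩ hst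
  rw [critLam_eq_of_deriv_psi_eq_zero hs (by linarith) hA.ne' hs_crit,
    critLam_eq_of_deriv_psi_eq_zero (hs.trans hst) (by linarith) hA.ne' ht_crit] at hmono
  exact hmono.false

lemma isMinOn_psi_of_deriv_psi_eq_zero (hTt : Tab a γ A B < t)
    (hcrit : deriv (psi a γ A B lam) t = 0) :
    IsMinOn (psi a γ A B lam) (Ici (Tab a γ A B)) t := by
  have hT := Tab_pos ha hγ4 hA hB
  have hγ : γ ≠ 0 := by linarith
  have hlam := critLam_eq_of_deriv_psi_eq_zero (hT.trans hTt) hγ hA.ne' hcrit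
  have hanti : StrictAntiOn (psi a γ A B lam) (Icc (Tab a γ A B) t) := by
    refine strictAntiOn_of_deriv_neg (convex_Icc _ _)
      ((continuousOn_psi hγ).mono fun s hs => hT.trans_le hs.1) fun s hs => ?_
    rw [interior_Icc] at hs
    have hs0 : 0 < s := hT.trans hs.1
    have hcrit_lt := strictAntiOn_critLam ha hγ2 hγ4 hA hB hs.1.le hTt.le hs.2
    rw [deriv_psi_eq hs0 hγ hA.ne']
    exact mul_neg_of_pos_of_neg (by positivity) (by linarith)
  have hmono : StrictMonoOn (psi a γ A B lam) (Ici t) := by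
    refine strictMonoOn_of_deriv_pos (convex_Ici _)
      ((continuousOn_psi hγ).mono fun s hs => (hT.trans hTt).trans_le hs) fun s hs => ?_
    rw [interior_Ici] at hs
    have hs0 : 0 < s := hT.trans (hTt.trans hs)
    have hcrit_lt := strictAntiOn_critLam ha hγ2 hγ4 hA hB hTt.le (hTt.trans hs).le hs
    rw [deriv_psi_eq hs0 hγ hA.ne']
    exact mul_pos (by positivity) (by linarith)
  intro s hs
  rcases le_total s t with hst | hts
  · exact hanti.antitoneOn ⟨hs, hst⟩ ⟨hTt.le, le_rfl⟩ hst
  · exact hmono.monotoneOn self_mem_Ici hts hts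

end Tab

lemma psi_lt_psi_of_lt {lam' : ℝ} (hA : A ≠ 0) (ht : t ≠ 0) (hlt : lam < lam') :
    psi a γ A B lam t < psi a γ A B lam' t := by
  have hpos : 0 < A ^ 2 * t ^ 4 := by positivity
  unfold psi
  nlinarith

theorem stmt_16_general (a γ A B lam lam' tminus tplus tminus' tplus' : ℝ) (ha : 0 < a)
    (hγ2 : 2 < γ) (hγ4 : γ < 4) (hA : 0 < A) (hB : 0 < B)
    (hlt : lam < lam')
    (htm : 0 < tminus) (horder : tminus < tplus)
    (hc1 : deriv (psi a γ A B lam) tminus = 0)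
    (hc2 : deriv (psi a γ A B lam) tplus = 0)
    (htm' : 0 < tminus') (horder' : tminus' < tplus')
    (hc1' : deriv (psi a γ A B lam') tminus' = 0)
    (hc2' : deriv (psi a γ A B lam') tplus' = 0) :
    psi a γ A B lam tplus < psi a γ A B lam' tplus' := by
  have hT := Tab_lt_of_deriv_psi_eq_zero ha hγ2 hγ4 hA hB htm horder hc1 hc2
  have hT' := Tab_lt_of_deriv_psi_eq_zero ha hγ2 hγ4 hA hB htm' horder' hc1' hc2'
  calc psi a γ A B lam tplus ≤ psi a γ A B lam tplus' :=
        isMinOn_psi_of_deriv_psi_eq_zero ha hγ2 hγ4 hA hB hT hc2 (mem_Ici.mpr hT'.le)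
    _ < psi a γ A B lam' tplus' :=
        psi_lt_psi_of_lt hA.ne' (htm'.trans horder').ne' hlt

/-- for `0 < λ < λ' < Λ(A,B)` one has `ψ_λ(t⁺(λ)) < ψ_{λ'}(t⁺(λ'))`:
the value of the fiber map at its local minimum point is strictly increasing in `λ`. -/
theorem stmt_16 (a γ A B lam lam' tminus tplus tminus' tplus' : ℝ) (ha : 0 < a)
    (hγ2 : 2 < γ) (hγ4 : γ < 4) (hA : 0 < A) (hB : 0 < B)
    (hlam : 0 < lam) (hlt : lam < lam') (hlt' : lam' < Lam a γ A B)
    (htm : 0 < tminus) (horder : tminus < tplus)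
    (hc1 : deriv (psi a γ A B lam) tminus = 0)
    (hc2 : deriv (psi a γ A B lam) tplus = 0)
    (hmin : IsLocalMin (psi a γ A B lam) tplus)
    (htm' : 0 < tminus') (horder' : tminus' < tplus')
    (hc1' : deriv (psi a γ A B lam') tminus' = 0)
    (hc2' : deriv (psi a γ A B lam') tplus' = 0)
    (hmin' : IsLocalMin (psi a γ A B lam') tplus') :
    psi a γ A B lam tplus < psi a γ A B lam' tplus' :=
  stmt_16_general a γ A B lam lam' tminus tplus tminus' tplus' ha hγ2 hγ4 hA hB hlt htm horder hc1
    hc2 htm' horder' hc1' hc2'
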